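/- arXiv:1008.2514 — 4 statements merged into one kernel-verified Lean document; each statement's English description precedes it below -/
import Mathlib

section
/- Let X, Y be nonempty finite sets and let P̲ be a coherent, strongly factorising lower prevision on gambles on X × Y. Fix x ∈ X with P̄({x} × Y) > 0, and let h be a gamble on X × Y. Define the regular extension R̲(h | x) := max{μ ∈ ℝ : P̲(1_{{x}×Y}·(h − μ)) ≥ 0}. Then R̲(h | x) = P̲(h(x, ·)), where h(x,·) is viewed as a gamble on Y extended cylindrically to X × Y. -/
theorem stmt_10 {X Y : Type*} [Fintype X] [Nonempty X] [Fintype Y] [Nonempty Y]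
    (P : (X × Y → ℝ) → ℝ)
    (h1 : ∀ f : X × Y → ℝ, P f ≥ Finset.univ.inf' Finset.univ_nonempty f)
    (h2 : ∀ f g : X × Y → ℝ, P (f + g) ≥ P f + P g)
    (h3 : ∀ (f : X × Y → ℝ) (l : ℝ), 0 ≤ l → P (l • f) = l * P f)
    (hfact : ∀ (f : X → ℝ) (g : Y → ℝ), (∀ x, 0 ≤ f x) →
      P (fun p => f p.1 * g p.2) = P (fun p => f p.1 * P (fun q => g q.2)))
    (x : X)
    (hx : 0 < -P (fun p : X × Y => -(({x} : Set X).indicator (1 : X → ℝ) p.1)))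
    (h : X × Y → ℝ) :
    IsGreatest
      {μ : ℝ | 0 ≤ P (fun p => ({x} : Set X).indicator (1 : X → ℝ) p.1 * (h p - μ))}
      (P (fun p : X × Y => h (x, p.2))) := by
  classical
  set I : X → ℝ := ({x} : Set X).indicator (1 : X → ℝ) with hIdef
  have hInonneg : ∀ a, 0 ≤ I a := fun a =>
    Set.indicator_nonneg (by intro _ _; norm_num) a
  have hP0 : P 0 = 0 := by
    have := h3 0 0 le_rfl
    simpa using this
  have hconst : ∀ d : ℝ, P (fun _ => d) ≥ d := by
    intro d
    have := h1 (fun _ => d)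
    rwa [Finset.inf'_const] at this
  have htrans : ∀ (f : X × Y → ℝ) (c : ℝ), P (fun p => f p + c) = P f + c := by
    intro f c
    have hge : P (fun p => f p + c) ≥ P f + c := by
      have := h2 f (fun _ => c)
      have h' := hconst c
      have he : (f + fun _ => c) = fun p => f p + c := by funext p; rfl
      rw [he] at this
      linarith
    have hle : P f ≥ P (fun p => f p + c) + (-c) := by
      have := h2 (fun p => f p + c) (fun _ => -c)
      have h' := hconst (-c)
      have he : ((fun p => f p + c) + fun _ => -c) = f := by funext p; simp
      rw [he] at this
      linarith
    linarith
  set μs : ℝ := P (fun p : X × Y => h (x, p.2)) with hμs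
  have key : ∀ μ : ℝ, P (fun p => I p.1 * (h p - μ)) = P (fun p => I p.1 * (μs - μ)) := by
    intro μ
    have he1 : (fun p : X × Y => I p.1 * (h p - μ)) =
        fun p => I p.1 * ((fun y => h (x, y) - μ) p.2) := by
      funext p
      by_cases hpx : p.1 = x
      · simp only [hIdef]
        rw [show h p = h (x, p.2) by rw [← hpx]]
      · have : I p.1 = 0 := by
          simp [hIdef, Set.indicator_apply, hpx]
        simp [this]
    rw [he1, hfact I (fun y => h (x, y) - μ) hInonneg]
    have he2 : P (fun q : X × Y => h (x, q.2) - μ) = μs - μ := by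
      have := htrans (fun q : X × Y => h (x, q.2)) (-μ)
      simp only [← sub_eq_add_neg] at this
      rw [this, hμs]
    rw [he2]
  constructor
  · show 0 ≤ P (fun p => I p.1 * (h p - μs))
    rw [key μs]
    have : (fun p : X × Y => I p.1 * (μs - μs)) = 0 := by
      funext p; simp
    rw [this, hP0]
  · intro μ hμ
    have hμ' : 0 ≤ P (fun p => I p.1 * (μs - μ)) := by
      rw [← key μ]; exact hμ
    by_contra hlt
    push_neg at hlt
    have hc : μs - μ < 0 := by linarith
    have he : (fun p : X × Y => I p.1 * (μs - μ)) =
        (-(μs - μ)) • (fun p : X × Y => -(I p.1)) := by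
      funext p; simp [smul_eq_mul]; ring
    rw [he, h3 _ _ (by linarith)] at hμ'
    nlinarith
end

section
/- Let X, Y be nonempty finite sets, P̲ a coherent strongly factorising lower prevision on gambles on X × Y, x ∈ X, and h a gamble on X × Y. Then for every μ ∈ ℝ: P̲(1_{{x}×Y}·(h − μ)) = P̲({x}×Y)·(P̲(h(x,·)) − μ) if P̲(h(x,·)) ≥ μ, and P̲(1_{{x}×Y}·(h − μ)) = P̄({x}×Y)·(P̲(h(x,·)) − μ) if P̲(h(x,·)) ≤ μ. -/
/-!
On the cylinder `{x} × Y` the gamble `h - μ` only depends on `y`, so strong factorisation replaces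
it by the constant `P̲(h(x,·)) - μ`, using that a coherent lower prevision commutes with adding
constants. What remains is a constant multiple of the indicator of `{x} × Y`; positive homogeneity
pulls out a nonnegative constant as `P̲(1_{x}) · c`, and a nonpositive one as `P̄(1_{x}) · c` with
the conjugate upper prevision `P̄ f = -P̲(-f)`.
-/

namespace LowerPrevision

variable {Ω : Type*} {P : (Ω → ℝ) → ℝ}

theorem map_zero (hom : ∀ (f : Ω → ℝ) (l : ℝ), 0 ≤ l → P (l • f) = l * P f) : P 0 = 0 := by
  simpa using hom 0 0 le_rfl

theorem map_const [Fintype Ω] [Nonempty Ω]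
    (bound : ∀ f : Ω → ℝ, P f ≥ Finset.univ.inf' Finset.univ_nonempty f)
    (superadd : ∀ f g : Ω → ℝ, P (f + g) ≥ P f + P g)
    (hom : ∀ (f : Ω → ℝ) (l : ℝ), 0 ≤ l → P (l • f) = l * P f) (c : ℝ) :
    P (fun _ => c) = c := by
  have hlower : ∀ c : ℝ, c ≤ P (fun _ => c) := fun c => by simpa using bound fun _ => c
  have hcancel : P ((fun _ => c) + fun _ => -c) = 0 := by
    rw [← map_zero hom]
    congr 1
    ext
    simp
  linarith [superadd (fun _ => c) (fun _ => -c), hlower c, hlower (-c)]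

theorem map_add_const [Fintype Ω] [Nonempty Ω]
    (bound : ∀ f : Ω → ℝ, P f ≥ Finset.univ.inf' Finset.univ_nonempty f)
    (superadd : ∀ f g : Ω → ℝ, P (f + g) ≥ P f + P g)
    (hom : ∀ (f : Ω → ℝ) (l : ℝ), 0 ≤ l → P (l • f) = l * P f) (f : Ω → ℝ) (c : ℝ) :
    P (fun ω => f ω + c) = P f + c := by
  have hconst := map_const bound superadd hom
  have hup : P f ≥ P (fun ω => f ω + c) + P (fun _ => -c) := by
    convert superadd (fun ω => f ω + c) (fun _ => -c) using 2
    ext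
    simp
  have hdown : P (fun ω => f ω + c) ≥ P f + P (fun _ => c) := superadd f fun _ => c
  rw [hconst] at hup hdown
  linarith

theorem map_mul_const_of_nonneg (hom : ∀ (f : Ω → ℝ) (l : ℝ), 0 ≤ l → P (l • f) = l * P f)
    (g : Ω → ℝ) {c : ℝ} (hc : 0 ≤ c) : P (fun ω => g ω * c) = P g * c := by
  rw [mul_comm, ← hom g c hc]
  congr 1
  ext
  simp [mul_comm]

theorem map_mul_const_of_nonpos (hom : ∀ (f : Ω → ℝ) (l : ℝ), 0 ≤ l → P (l • f) = l * P f)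
    (g : Ω → ℝ) {c : ℝ} (hc : c ≤ 0) : P (fun ω => g ω * c) = -P (fun ω => -g ω) * c := by
  have := map_mul_const_of_nonneg hom (fun ω => -g ω) (neg_nonneg.2 hc)
  simp only [neg_mul_neg] at this
  rw [this]
  ring

end LowerPrevision

theorem Set.indicator_singleton_fst_mul {α β M : Type*} [MulZeroOneClass M] (a : α)
    (F : α × β → M) (p : α × β) :
    ({a} : Set α).indicator 1 p.1 * F p = ({a} : Set α).indicator 1 p.1 * F (a, p.2) := by
  by_cases hp : p.1 = a
  · rw [← hp]
  · simp [hp]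

open LowerPrevision in
theorem stmt_11 {X Y : Type*} [Fintype X] [Nonempty X] [Fintype Y] [Nonempty Y]
    (P : (X × Y → ℝ) → ℝ)
    (h1 : ∀ f : X × Y → ℝ, P f ≥ Finset.univ.inf' Finset.univ_nonempty f)
    (h2 : ∀ f g : X × Y → ℝ, P (f + g) ≥ P f + P g)
    (h3 : ∀ (f : X × Y → ℝ) (l : ℝ), 0 ≤ l → P (l • f) = l * P f)
    (hfact : ∀ (f : X → ℝ) (g : Y → ℝ), (∀ x, 0 ≤ f x) →
      P (fun p => f p.1 * g p.2) = P (fun p => f p.1 * P (fun q => g q.2)))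
    (x : X) (h : X × Y → ℝ) :
    ∀ μ : ℝ,
      (P (fun p : X × Y => h (x, p.2)) ≥ μ →
        P (fun p => ({x} : Set X).indicator (1 : X → ℝ) p.1 * (h p - μ))
          = P (fun p : X × Y => ({x} : Set X).indicator (1 : X → ℝ) p.1)
            * (P (fun p : X × Y => h (x, p.2)) - μ)) ∧
      (P (fun p : X × Y => h (x, p.2)) ≤ μ →
        P (fun p => ({x} : Set X).indicator (1 : X → ℝ) p.1 * (h p - μ))
          = (-P (fun p : X × Y => -(({x} : Set X).indicator (1 : X → ℝ) p.1)))
            * (P (fun p : X × Y => h (x, p.2)) - μ)) := by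
  intro μ
  have hsection : P (fun p => ({x} : Set X).indicator (1 : X → ℝ) p.1 * (h p - μ))
      = P (fun p => ({x} : Set X).indicator (1 : X → ℝ) p.1
          * (P (fun p : X × Y => h (x, p.2)) - μ)) := by
    have hshift : P (fun q : X × Y => h (x, q.2) - μ) = P (fun p : X × Y => h (x, p.2)) - μ := by
      simpa [← sub_eq_add_neg] using map_add_const h1 h2 h3 (fun p : X × Y => h (x, p.2)) (-μ)
    rw [funext (Set.indicator_singleton_fst_mul x fun p => h p - μ),
      hfact (({x} : Set X).indicator 1) (fun y => h (x, y) - μ)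
        (Set.indicator_nonneg fun _ _ => zero_le_one), hshift]
  exact ⟨fun hμ => hsection.trans (map_mul_const_of_nonneg h3 _ (sub_nonneg.2 hμ)),
    fun hμ => hsection.trans (map_mul_const_of_nonpos h3 _ (sub_nonpos.2 hμ))⟩
end

section
/- Let X, Y be nonempty finite sets. Suppose for each y ∈ Y we have a coherent lower prevision P̲(·|y) on gambles on X (the conditional model), and Q̲ is a coherent lower prevision on gambles on Y (the marginal model). Define the marginal extension M̲(h) := Q̲(y ↦ P̲(h(·,y)|y)) for gambles h on X × Y. Then M̲ is a coherent lower prevision on gambles on X × Y: M̲(h) ≥ min h, M̲ is superadditive, and M̲ is nonnegatively homogeneous. -/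
theorem stmt_17 {X Y : Type*} [Fintype X] [Nonempty X] [Fintype Y] [Nonempty Y]
    (Pc : Y → (X → ℝ) → ℝ) (Q : (Y → ℝ) → ℝ)
    (hP1 : ∀ (y : Y) (f : X → ℝ), Pc y f ≥ Finset.univ.inf' Finset.univ_nonempty f)
    (hP2 : ∀ (y : Y) (f g : X → ℝ), Pc y (f + g) ≥ Pc y f + Pc y g)
    (hP3 : ∀ (y : Y) (f : X → ℝ) (l : ℝ), 0 ≤ l → Pc y (l • f) = l * Pc y f)
    (hQ1 : ∀ f : Y → ℝ, Q f ≥ Finset.univ.inf' Finset.univ_nonempty f)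
    (hQ2 : ∀ f g : Y → ℝ, Q (f + g) ≥ Q f + Q g)
    (hQ3 : ∀ (f : Y → ℝ) (l : ℝ), 0 ≤ l → Q (l • f) = l * Q f)
    (M : (X × Y → ℝ) → ℝ)
    (hM : ∀ h : X × Y → ℝ, M h = Q (fun y => Pc y (fun x => h (x, y)))) :
    (∀ h : X × Y → ℝ, M h ≥ Finset.univ.inf' Finset.univ_nonempty h) ∧
    (∀ h k : X × Y → ℝ, M (h + k) ≥ M h + M k) ∧
    (∀ (h : X × Y → ℝ) (l : ℝ), 0 ≤ l → M (l • h) = l * M h) := by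
  -- Q is monotone
  have hQmono : ∀ f g : Y → ℝ, (∀ y, f y ≤ g y) → Q f ≤ Q g := by
    intro f g hfg
    have h1 : Q g ≥ Q f + Q (g - f) := by
      have := hQ2 f (g - f)
      simpa using this
    have h2 : Q (g - f) ≥ 0 := by
      refine le_trans ?_ (hQ1 (g - f))
      obtain ⟨y, -, hy⟩ := Finset.exists_mem_eq_inf' (Finset.univ_nonempty (α := Y)) (g - f)
      rw [hy]
      simpa using hfg y
    linarith
  refine ⟨?_, ?_, ?_⟩
  · intro h
    rw [hM]
    refine le_trans ?_ (hQ1 _)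
    obtain ⟨y, -, hy⟩ := Finset.exists_mem_eq_inf' (Finset.univ_nonempty (α := Y))
      (fun y => Pc y (fun x => h (x, y)))
    rw [hy]
    refine le_trans ?_ (hP1 y _)
    obtain ⟨x, -, hx⟩ := Finset.exists_mem_eq_inf' (Finset.univ_nonempty (α := X))
      (fun x => h (x, y))
    rw [hx]
    exact Finset.inf'_le _ (Finset.mem_univ (x, y))
  · intro h k
    rw [hM, hM, hM]
    refine le_trans (hQ2 _ _) (hQmono _ _ ?_)
    intro y
    have := hP2 y (fun x => h (x, y)) (fun x => k (x, y))
    simpa [Pi.add_def] using this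
  · intro h l hl
    rw [hM, hM]
    have : (fun y => Pc y (fun x => (l • h) (x, y))) =
        l • (fun y => Pc y (fun x => h (x, y))) := by
      funext y
      have := hP3 y (fun x => h (x, y)) l hl
      simpa [Pi.smul_def] using this
    rw [this, hQ3 _ _ hl]
end

section
/- Let P̲₁ and P̲₂ be coherent lower previsions on gambles on nonempty finite sets X₁ and X₂ respectively, and suppose P̲ is any coherent lower prevision on gambles on X₁ × X₂ that is strongly factorising and coincides with P̲₁ and P̲₂ on cylindrical extensions of gambles on X₁ and X₂. Then for all events A₁ ⊆ X₁ and A₂ ⊆ X₂: P̲(A₁ × A₂) = P̲₁(A₁)·P̲₂(A₂) and P̄(A₁ × A₂) = P̄₁(A₁)·P̄₂(A₂). -/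
theorem stmt_19 {X₁ X₂ : Type*} [Fintype X₁] [Nonempty X₁] [Fintype X₂] [Nonempty X₂]
    (P₁ : (X₁ → ℝ) → ℝ) (P₂ : (X₂ → ℝ) → ℝ)
    (hP₁1 : ∀ f : X₁ → ℝ, P₁ f ≥ Finset.univ.inf' Finset.univ_nonempty f)
    (hP₁2 : ∀ f g : X₁ → ℝ, P₁ (f + g) ≥ P₁ f + P₁ g)
    (hP₁3 : ∀ (f : X₁ → ℝ) (l : ℝ), 0 ≤ l → P₁ (l • f) = l * P₁ f)
    (hP₂1 : ∀ f : X₂ → ℝ, P₂ f ≥ Finset.univ.inf' Finset.univ_nonempty f)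
    (hP₂2 : ∀ f g : X₂ → ℝ, P₂ (f + g) ≥ P₂ f + P₂ g)
    (hP₂3 : ∀ (f : X₂ → ℝ) (l : ℝ), 0 ≤ l → P₂ (l • f) = l * P₂ f)
    (P : (X₁ × X₂ → ℝ) → ℝ)
    (h1 : ∀ f : X₁ × X₂ → ℝ, P f ≥ Finset.univ.inf' Finset.univ_nonempty f)
    (h2 : ∀ f g : X₁ × X₂ → ℝ, P (f + g) ≥ P f + P g)
    (h3 : ∀ (f : X₁ × X₂ → ℝ) (l : ℝ), 0 ≤ l → P (l • f) = l * P f)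
    (hfact : ∀ (f : X₁ → ℝ) (g : X₂ → ℝ), (∀ x, 0 ≤ f x) →
      P (fun p => f p.1 * g p.2) = P (fun p => f p.1 * P (fun q => g q.2)))
    (hmarg₁ : ∀ f : X₁ → ℝ, P (fun p => f p.1) = P₁ f)
    (hmarg₂ : ∀ g : X₂ → ℝ, P (fun p => g p.2) = P₂ g) :
    ∀ (A₁ : Set X₁) (A₂ : Set X₂),
      P (fun p => A₁.indicator (1 : X₁ → ℝ) p.1 * A₂.indicator (1 : X₂ → ℝ) p.2)
        = P₁ (A₁.indicator (1 : X₁ → ℝ)) * P₂ (A₂.indicator (1 : X₂ → ℝ)) ∧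
      -P (fun p => -(A₁.indicator (1 : X₁ → ℝ) p.1 * A₂.indicator (1 : X₂ → ℝ) p.2))
        = (-P₁ (-(A₁.indicator (1 : X₁ → ℝ)))) * (-P₂ (-(A₂.indicator (1 : X₂ → ℝ)))) := by
  intro A₁ A₂
  set f := A₁.indicator (1 : X₁ → ℝ) with hfdef
  set g := A₂.indicator (1 : X₂ → ℝ) with hgdef
  have hf : ∀ x, 0 ≤ f x := fun x => Set.indicator_nonneg (fun _ _ => zero_le_one) x
  have hg : ∀ x, 0 ≤ g x := fun x => Set.indicator_nonneg (fun _ _ => zero_le_one) x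
  have hc₂ : 0 ≤ P₂ g := le_trans (Finset.le_inf' _ _ fun x _ => hg x) (hP₂1 g)
  have hzero : P₂ (0 : X₂ → ℝ) = 0 := by
    have := hP₂3 0 0 le_rfl; simpa using this
  have hneg : P₂ (-g) ≤ 0 := by
    have h := hP₂2 g (-g)
    rw [add_neg_cancel, hzero] at h
    linarith
  constructor
  · rw [hfact f g hf]
    simp only [hmarg₂]
    have e : (fun p : X₁ × X₂ => f p.1 * P₂ g) = (P₂ g) • (fun p : X₁ × X₂ => f p.1) := by
      funext p; simp [mul_comm]
    rw [e, h3 _ _ hc₂, hmarg₁, mul_comm]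
  · have e1 : (fun p : X₁ × X₂ => -(f p.1 * g p.2)) = (fun p : X₁ × X₂ => f p.1 * (-g) p.2) := by
      funext p; simp
    rw [e1, hfact f (-g) hf]
    simp only [hmarg₂]
    have e2 : (fun p : X₁ × X₂ => f p.1 * P₂ (-g)) = (-(P₂ (-g))) • (fun p : X₁ × X₂ => (-f) p.1) := by
      funext p; simp; ring
    rw [e2, h3 _ _ (by linarith), hmarg₁]
    ring
end
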